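/- In ℝ³, no family of at most 4 subspaces allows phase retrieval. Equivalently, for any subspaces W₁,...,W_N of ℝ³ with N ≤ 4 and orthogonal projections P_n, there exist x, y ∈ ℝ³ with x ≠ ±y and ‖P_n x‖ = ‖P_n y‖ for all n. -/

import Mathlib

/-
A quadratic form on `ℝ³` is a symmetric matrix, and each measurement `x ↦ ‖Tₙ x‖²` becomes a
linear functional `M ↦ Tr(M Pₙ)` on the 6-dimensional space of symmetric matrices. With at most
four of them the common kernel contains two independent symmetric matrices `A, B`. Since
`det (-A) = -det A` in dimension three, the intermediate value theorem gives a nonzero singular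
`M = cos t • A + sin t • B` in the kernel. Diagonalising, `M = λ₁ v₁v₁ᵀ + λ₂ v₂v₂ᵀ` with orthonormal
`v₁, v₂`, and `Tr(M Pₙ) = 0` reads `λ₁ ‖Tₙ v₁‖² + λ₂ ‖Tₙ v₂‖² = 0`. If `λ₁ > 0 > λ₂`, then `√λ₁ v₁`
and `√(-λ₂) v₂` have the same measurements. If `λ₁, λ₂` have the same sign, some `vᵢ` is killed by
every `Tₙ`, so it has the same measurements as `0`.
-/

open Module Real Matrix

theorem LinearMap.exists_linearIndependent_pair_mem_ker {K E F : Type*} [Field K]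
    [AddCommGroup E] [Module K E] [FiniteDimensional K E] [AddCommGroup F] [Module K F]
    [FiniteDimensional K F] (T : E →ₗ[K] F) (h : finrank K F + 2 ≤ finrank K E) :
    ∃ v : Fin 2 → E, LinearIndependent K v ∧ ∀ i, v i ∈ LinearMap.ker T := by
  have hker : 2 ≤ finrank K (LinearMap.ker T) := by
    have := T.finrank_range_add_finrank_ker
    have := Submodule.finrank_le (LinearMap.range T)
    omega
  obtain ⟨v, hv⟩ := exists_linearIndependent_of_le_finrank hker
  exact ⟨_, hv.map' _ (LinearMap.ker T).ker_subtype, fun i => (v i).2⟩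

theorem exists_cos_smul_add_sin_smul_eq_zero {E : Type*} [TopologicalSpace E] [AddCommGroup E]
    [Module ℝ E] [ContinuousAdd E] [ContinuousSMul ℝ E] {f : E → ℝ} (hf : Continuous f)
    (hodd : f.Odd) (a b : E) : ∃ t, f (cos t • a + sin t • b) = 0 := by
  have hpath : Continuous fun t : ℝ => f (cos t • a + sin t • b) := by fun_prop
  have h0 : (0 : ℝ) ∈ Set.uIcc (f (cos 0 • a + sin 0 • b)) (f (cos π • a + sin π • b)) := by
    simp only [cos_zero, sin_zero, cos_pi, sin_pi, one_smul, zero_smul, add_zero, neg_one_smul,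
      hodd a]
    rcases le_total (f a) 0 with h | h <;> simp [h]
  obtain ⟨t, -, ht⟩ := intermediate_value_uIcc hpath.continuousOn h0
  exact ⟨t, ht⟩

theorem LinearIndependent.cos_smul_add_sin_smul_ne_zero {E : Type*} [AddCommGroup E]
    [Module ℝ E] {v : Fin 2 → E} (hv : LinearIndependent ℝ v) (t : ℝ) :
    cos t • v 0 + sin t • v 1 ≠ 0 := by
  intro h
  have := Fintype.linearIndependent_iff.mp hv ![cos t, sin t] (by simpa using h)
  have := sin_sq_add_cos_sq t
  simp_all

namespace Matrix

section SkewEntries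

variable (R ι : Type*) [CommRing R] [LinearOrder ι]

def skewEntries : Matrix ι ι R →ₗ[R] ({p : ι × ι // p.1 < p.2} → R) :=
  LinearMap.pi fun p => entryLinearMap R R p.1.1 p.1.2 - entryLinearMap R R p.1.2 p.1.1

variable {R ι}

theorem isSymm_of_skewEntries_eq_zero {M : Matrix ι ι R} (h : skewEntries R ι M = 0) :
    M.IsSymm := by
  have hp (p : {p : ι × ι // p.1 < p.2}) : M p.1.1 p.1.2 = M p.1.2 p.1.1 :=
    sub_eq_zero.mp (congr_fun h p)
  refine IsSymm.ext fun i j => ?_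
  rcases lt_trichotomy i j with hij | rfl | hij
  · exact (hp ⟨(i, j), hij⟩).symm
  · rfl
  · exact hp ⟨(j, i), hij⟩

end SkewEntries

theorem exists_isHermitian_det_eq_zero_mem_ker {F : Type*} [AddCommGroup F] [Module ℝ F]
    [FiniteDimensional ℝ F] (L : Matrix (Fin 3) (Fin 3) ℝ →ₗ[ℝ] F) (hF : finrank ℝ F ≤ 4) :
    ∃ M, M ≠ 0 ∧ M.IsHermitian ∧ M.det = 0 ∧ L M = 0 := by
  have hdim : finrank ℝ (F × ({p : Fin 3 × Fin 3 // p.1 < p.2} → ℝ)) + 2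
      ≤ finrank ℝ (Matrix (Fin 3) (Fin 3) ℝ) := by
    rw [finrank_prod, finrank_pi, finrank_matrix, finrank_self]
    have : Fintype.card {p : Fin 3 × Fin 3 // p.1 < p.2} = 3 := by decide
    simp only [Fintype.card_fin]
    omega
  obtain ⟨v, hv, hker⟩ :=
    (L.prod (skewEntries ℝ (Fin 3))).exists_linearIndependent_pair_mem_ker hdim
  have hodd : Function.Odd (det : Matrix (Fin 3) (Fin 3) ℝ → ℝ) := fun M => by
    rw [det_neg, Fintype.card_fin]
    ring
  obtain ⟨t, ht⟩ := exists_cos_smul_add_sin_smul_eq_zero continuous_id.matrix_det hodd (v 0) (v 1)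
  have hmem :=
    add_mem (Submodule.smul_mem _ (cos t) (hker 0)) (Submodule.smul_mem _ (sin t) (hker 1))
  rw [LinearMap.mem_ker, LinearMap.prod_apply, Prod.mk_eq_zero] at hmem
  exact ⟨_, hv.cos_smul_add_sin_smul_ne_zero t,
    isHermitian_iff_isSymm.mpr (isSymm_of_skewEntries_eq_zero hmem.2), ht, hmem.1⟩

section GramPairing

variable {ι : Type*} [Fintype ι] [DecidableEq ι]

theorem _root_.LinearMap.BilinForm.apply_eq_sum_single
    (B : LinearMap.BilinForm ℝ (EuclideanSpace ℝ ι)) (x y : EuclideanSpace ℝ ι) :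
    B x y = ∑ i, ∑ j, x i * y j * B (EuclideanSpace.single i 1) (EuclideanSpace.single j 1) := by
  conv_lhs => rw [← (EuclideanSpace.basisFun ι ℝ).sum_repr x,
    ← (EuclideanSpace.basisFun ι ℝ).sum_repr y]
  simp only [map_sum, map_smul, LinearMap.sum_apply, LinearMap.smul_apply, smul_eq_mul,
    EuclideanSpace.basisFun_apply, EuclideanSpace.basisFun_repr, Finset.mul_sum]
  rw [Finset.sum_comm]
  exact Finset.sum_congr rfl fun _ _ => Finset.sum_congr rfl fun _ _ => by ring

/-- For `B x y = ⟪P x, P y⟫` this is the measurement `M ↦ Tr(M (PᵀP))`. -/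
noncomputable def gramPairing (B : LinearMap.BilinForm ℝ (EuclideanSpace ℝ ι)) :
    Matrix ι ι ℝ →ₗ[ℝ] ℝ :=
  ∑ i, ∑ j, B (EuclideanSpace.single i 1) (EuclideanSpace.single j 1) • entryLinearMap ℝ ℝ i j

theorem gramPairing_apply (B : LinearMap.BilinForm ℝ (EuclideanSpace ℝ ι))
    (M : Matrix ι ι ℝ) :
    gramPairing B M
      = ∑ i, ∑ j, M i j * B (EuclideanSpace.single i 1) (EuclideanSpace.single j 1) := by
  simp [gramPairing, LinearMap.sum_apply, mul_comm]

theorem IsHermitian.apply_eq_sum_eigenvalues {M : Matrix ι ι ℝ} (hM : M.IsHermitian)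
    (i j : ι) :
    M i j = ∑ k, hM.eigenvalues k * (hM.eigenvectorBasis k i * hM.eigenvectorBasis k j) := by
  conv_lhs => rw [hM.spectral_theorem, Unitary.conjStarAlgAut_apply]
  refine Matrix.mul_apply.trans (Finset.sum_congr rfl fun k _ => ?_)
  simp [Matrix.mul_diagonal, IsHermitian.eigenvectorUnitary_apply]
  ring

theorem IsHermitian.gramPairing_eq_sum_eigenvalues {M : Matrix ι ι ℝ} (hM : M.IsHermitian)
    (B : LinearMap.BilinForm ℝ (EuclideanSpace ℝ ι)) :
    gramPairing B M
      = ∑ k, hM.eigenvalues k * B (hM.eigenvectorBasis k) (hM.eigenvectorBasis k) := by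
  set v := hM.eigenvectorBasis
  let c (i j : ι) : ℝ := B (EuclideanSpace.single i 1) (EuclideanSpace.single j 1)
  calc gramPairing B M = ∑ i, ∑ j, ∑ k, hM.eigenvalues k * (v k i * v k j * c i j) := by
        rw [gramPairing_apply]
        refine Finset.sum_congr rfl fun i _ => Finset.sum_congr rfl fun j _ => ?_
        rw [hM.apply_eq_sum_eigenvalues, Finset.sum_mul]
        exact Finset.sum_congr rfl fun k _ => by ring
    _ = ∑ i, ∑ k, ∑ j, hM.eigenvalues k * (v k i * v k j * c i j) :=
        Finset.sum_congr rfl fun i _ => Finset.sum_comm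
    _ = ∑ k, hM.eigenvalues k * B (v k) (v k) := by
        rw [Finset.sum_comm]
        simp_rw [B.apply_eq_sum_single (v _), Finset.mul_sum]
        rfl

end GramPairing

theorem IsHermitian.exists_gramPairing_eq_sum_of_det_eq_zero {m : ℕ}
    {M : Matrix (Fin (m + 1)) (Fin (m + 1)) ℝ} (hM : M.IsHermitian) (hM0 : M ≠ 0)
    (hdet : M.det = 0) :
    ∃ c : Fin m → ℝ, c ≠ 0 ∧ ∃ v : Fin m → EuclideanSpace ℝ (Fin (m + 1)),
      LinearIndependent ℝ v ∧ ∀ B, gramPairing B M = ∑ i, c i * B (v i) (v i) := by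
  obtain ⟨k, hk⟩ : ∃ k, hM.eigenvalues k = 0 := by
    simpa [hdet, eq_comm (a := (0 : ℝ)), Finset.prod_eq_zero_iff] using
      hM.det_eq_prod_eigenvalues
  refine ⟨hM.eigenvalues ∘ k.succAbove, ?_, hM.eigenvectorBasis ∘ k.succAbove,
    hM.eigenvectorBasis.orthonormal.linearIndependent.comp _ Fin.succAbove_right_injective,
    fun B => ?_⟩
  · intro h
    refine hM0 (hM.eigenvalues_eq_zero_iff.mp (funext fun i => ?_))
    rcases Fin.eq_self_or_eq_succAbove k i with rfl | ⟨j, rfl⟩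
    exacts [hk, congr_fun h j]
  · rw [hM.gramPairing_eq_sum_eigenvalues, Fin.sum_univ_succAbove _ k, hk, zero_mul, zero_add]
    rfl

end Matrix

section PhaseRetrieval

variable {E ι : Type*} {G : ι → Type*} [AddCommGroup E] [Module ℝ E]
  [∀ n, SeminormedAddCommGroup (G n)] [∀ n, NormedSpace ℝ (G n)]

def AllowsPhaseRetrieval (T : ∀ n, E →ₗ[ℝ] G n) : Prop :=
  ∀ x y, (∀ n, ‖T n x‖ = ‖T n y‖) → x = y ∨ x = -y

variable (T : ∀ n, E →ₗ[ℝ] G n) {v : Fin 2 → E}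

theorem not_allowsPhaseRetrieval_iff :
    ¬ AllowsPhaseRetrieval T ↔ ∃ x y, x ≠ y ∧ x ≠ -y ∧ ∀ n, ‖T n x‖ = ‖T n y‖ := by
  simp only [AllowsPhaseRetrieval, not_forall, not_or]
  exact ⟨fun ⟨x, y, h, hxy⟩ => ⟨x, y, hxy.1, hxy.2, h⟩, fun ⟨x, y, h₁, h₂, h⟩ => ⟨x, y, h, h₁, h₂⟩⟩

theorem not_allowsPhaseRetrieval_of_pos_of_neg (hv : LinearIndependent ℝ v) {a b : ℝ}
    (ha : 0 < a) (hb : b < 0) (h : ∀ n, a * ‖T n (v 0)‖ ^ 2 + b * ‖T n (v 1)‖ ^ 2 = 0) :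
    ¬ AllowsPhaseRetrieval T := by
  have hne (s : ℝ) : √a • v 0 ≠ s • v 1 := fun hs => by
    have := Fintype.linearIndependent_iff.mp hv ![√a, -s] (by simp [hs])
    exact (sqrt_pos.mpr ha).ne' (this 0)
  have hnorm_sq (s : ℝ) (hs : 0 ≤ s) (n : ι) (w : E) :
      ‖T n (√s • w)‖ ^ 2 = s * ‖T n w‖ ^ 2 := by
    rw [map_smul, norm_smul, mul_pow, norm_eq_abs, sq_abs, sq_sqrt hs]
  refine (not_allowsPhaseRetrieval_iff T).mpr ⟨√a • v 0, √(-b) • v 1, hne _,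
    by simpa [← neg_smul] using hne (-√(-b)), fun n => ?_⟩
  rw [← sq_eq_sq₀ (norm_nonneg _) (norm_nonneg _), hnorm_sq a ha.le, hnorm_sq (-b) (by linarith)]
  linarith [h n]

theorem not_allowsPhaseRetrieval_of_sum_eq_zero (hv : LinearIndependent ℝ v) {c : Fin 2 → ℝ}
    (hc : c ≠ 0) (h : ∀ n, ∑ i, c i * ‖T n (v i)‖ ^ 2 = 0) :
    ¬ AllowsPhaseRetrieval T := by
  simp only [Fin.sum_univ_two] at h
  rcases lt_or_ge (c 0 * c 1) 0 with hneg | hnonneg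
  · rcases lt_or_gt_of_ne (left_ne_zero_of_mul hneg.ne) with h0 | h0
    · exact not_allowsPhaseRetrieval_of_pos_of_neg T hv (a := -c 0) (b := -c 1)
        (neg_pos.mpr h0) (by nlinarith) fun n => by linarith [h n]
    · exact not_allowsPhaseRetrieval_of_pos_of_neg T hv h0 (by nlinarith) h
  obtain ⟨i, hi⟩ : ∃ i, c i ≠ 0 := Function.ne_iff.mp hc
  have hterm (n : ι) : ∀ j, c j * ‖T n (v j)‖ ^ 2 = 0 := by
    set X := ‖T n (v 0)‖ ^ 2
    set Y := ‖T n (v 1)‖ ^ 2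
    have hXY := mul_nonneg hnonneg (mul_nonneg (sq_nonneg ‖T n (v 0)‖) (sq_nonneg ‖T n (v 1)‖))
    have h0 : (c 0 * X) ^ 2 = -(c 0 * c 1 * (X * Y)) := by linear_combination (c 0 * X) * h n
    have h1 : (c 1 * Y) ^ 2 = -(c 0 * c 1 * (X * Y)) := by linear_combination (c 1 * Y) * h n
    exact Fin.forall_fin_two.mpr ⟨pow_eq_zero_iff two_ne_zero |>.mp (by nlinarith),
      pow_eq_zero_iff two_ne_zero |>.mp (by nlinarith)⟩
  refine (not_allowsPhaseRetrieval_iff T).mpr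
    ⟨v i, 0, hv.ne_zero i, by simpa using hv.ne_zero i, fun n => ?_⟩
  simpa [hi] using hterm n i

end PhaseRetrieval

theorem not_allowsPhaseRetrieval_of_card_le_four {ι : Type*} [Fintype ι]
    (hι : Fintype.card ι ≤ 4) {G : ι → Type*} [∀ n, NormedAddCommGroup (G n)]
    [∀ n, InnerProductSpace ℝ (G n)] (T : ∀ n, EuclideanSpace ℝ (Fin 3) →ₗ[ℝ] G n) :
    ¬ AllowsPhaseRetrieval T := by
  let B (n : ι) : LinearMap.BilinForm ℝ (EuclideanSpace ℝ (Fin 3)) :=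
    (innerₗ (G n)).compl₁₂ (T n) (T n)
  obtain ⟨M, hM0, hM, hdet, hker⟩ := exists_isHermitian_det_eq_zero_mem_ker
    (LinearMap.pi fun n => gramPairing (B n)) (by simpa using hι)
  obtain ⟨c, hc, v, hv, hpair⟩ := hM.exists_gramPairing_eq_sum_of_det_eq_zero hM0 hdet
  refine not_allowsPhaseRetrieval_of_sum_eq_zero T hv hc fun n => ?_
  simpa [B, hpair, real_inner_self_eq_norm_sq] using congr_fun hker n

/-- In ℝ³, no family of at most 4 subspaces allows phase retrieval. -/
theorem stmt_13 (N : ℕ) (hN : N ≤ 4) (W : Fin N → Submodule ℝ (EuclideanSpace ℝ (Fin 3))) :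
    ∃ x y : EuclideanSpace ℝ (Fin 3), x ≠ y ∧ x ≠ -y ∧
      ∀ n, ‖(W n).orthogonalProjectionOnto x‖ = ‖(W n).orthogonalProjectionOnto y‖ := by
  simpa [not_allowsPhaseRetrieval_iff] using not_allowsPhaseRetrieval_of_card_le_four
    (by simpa using hN) fun n => ((W n).orthogonalProjectionOnto : _ →ₗ[ℝ] W n)
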